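/- arXiv:1208.1087 — 11 statements merged into one kernel-verified Lean document; each statement's English description precedes it below -/
import Mathlib

section
/- Let (β, γ, p) be a coder model and suppose there is c₀ ∈ C with γ(k) = c₀ for all k ∈ {1,...,N}. Then for every β' ∈ [0,1] with β' ≤ β + (1−β)·p_{c₀} there exists a function p' : C → [0,1] with Σ_{c∈C} p'_c = 1 such that for all c ∈ C and all k ∈ {1,...,N}: β·δ_{c,γ(k)} + (1−β)·p_c = β'·δ_{c,γ(k)} + (1−β')·p'_c (where δ is the Kronecker delta). -/
/-!
The assignment probabilities `q c = β δ_{c,c₀} + (1 - β) p_c` sum to one and are nonnegative off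
`c₀`. Any such `q` splits as `q = β' δ_{c₀} + (1 - β') p'` with `p' = (q - β' δ_{c₀}) / (1 - β')`,
a probability vector as soon as `β' ≤ q c₀ ≤ 1`. In the boundary case `β' = 1` this forces
`q = δ_{c₀}`, and `p' = q` works.
-/

open Finset

section

variable {C : Type*} [Fintype C] [DecidableEq C]

lemma apply_le_one_of_sum_eq_one {q : C → ℝ} {c₀ : C} (hq : ∀ c ≠ c₀, 0 ≤ q c)
    (hsum : ∑ c, q c = 1) : q c₀ ≤ 1 := by
  rw [← add_sum_erase _ _ (mem_univ c₀)] at hsum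
  have : 0 ≤ ∑ c ∈ univ.erase c₀, q c := sum_nonneg fun c hc => hq c (ne_of_mem_erase hc)
  linarith

lemma eq_indicator_of_sum_eq_one {q : C → ℝ} {c₀ : C} (hq : ∀ c ≠ c₀, 0 ≤ q c)
    (hsum : ∑ c, q c = 1) (h₀ : q c₀ = 1) (c : C) : q c = if c = c₀ then 1 else 0 := by
  rw [← add_sum_erase _ _ (mem_univ c₀), h₀, add_eq_left] at hsum
  split_ifs with hc
  · rw [hc, h₀]
  · exact (sum_eq_zero_iff_of_nonneg fun c hc => hq c (ne_of_mem_erase hc)).1 hsum c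
      (mem_erase.2 ⟨hc, mem_univ c⟩)

theorem exists_eq_mix_indicator_of_le {q : C → ℝ} {c₀ : C} (hq : ∀ c ≠ c₀, 0 ≤ q c)
    (hsum : ∑ c, q c = 1) {β' : ℝ} (hβ' : β' ≤ q c₀) :
    ∃ p' : C → ℝ, (∀ c, 0 ≤ p' c ∧ p' c ≤ 1) ∧ ∑ c, p' c = 1 ∧
      ∀ c, q c = β' * (if c = c₀ then 1 else 0) + (1 - β') * p' c := by
  suffices ∃ p' : C → ℝ, (∀ c, 0 ≤ p' c) ∧ ∑ c, p' c = 1 ∧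
      ∀ c, q c = β' * (if c = c₀ then 1 else 0) + (1 - β') * p' c by
    obtain ⟨p', hp'0, hp'sum, hmix⟩ := this
    exact ⟨p', fun c => ⟨hp'0 c, apply_le_one_of_sum_eq_one (fun c _ => hp'0 c) hp'sum⟩,
      hp'sum, hmix⟩
  have hq₀ : q c₀ ≤ 1 := apply_le_one_of_sum_eq_one hq hsum
  rcases hβ'.trans hq₀ |>.eq_or_lt with rfl | hlt
  · refine ⟨q, fun c => ?_, hsum, fun c => ?_⟩
    · obtain rfl | hc := eq_or_ne c c₀
      · linarith
      · exact hq c hc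
    · rw [eq_indicator_of_sum_eq_one hq hsum (le_antisymm hq₀ hβ') c]
      ring
  · have hpos : 0 < 1 - β' := sub_pos.2 hlt
    refine ⟨fun c => (q c - β' * (if c = c₀ then 1 else 0)) / (1 - β'), fun c => ?_, ?_,
      fun c => ?_⟩
    · refine div_nonneg ?_ hpos.le
      split_ifs with hc
      · rw [hc]; linarith
      · simpa using hq c hc
    · rw [← sum_div, sum_sub_distrib, ← mul_sum, sum_ite_eq' univ c₀, hsum,
        if_pos (mem_univ c₀), mul_one, div_self hpos.ne']
    · field_simp
      ring

end

theorem stmt_0_general {C : Type*} [Fintype C] [DecidableEq C]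
    {N : ℕ} (γ : Fin N → C)
    (β : ℝ) (hβ1 : β ≤ 1)
    (p : C → ℝ) (hp0 : ∀ c, 0 ≤ p c) (hpsum : ∑ c, p c = 1)
    (c₀ : C) (hγ : ∀ k, γ k = c₀)
    (β' : ℝ)
    (hβ'le : β' ≤ β + (1 - β) * p c₀) :
    ∃ p' : C → ℝ, (∀ c, 0 ≤ p' c ∧ p' c ≤ 1) ∧ (∑ c, p' c = 1) ∧
      ∀ (c : C) (k : Fin N),
        β * (if c = γ k then 1 else 0) + (1 - β) * p c
          = β' * (if c = γ k then 1 else 0) + (1 - β') * p' c := by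
  set q : C → ℝ := fun c => β * (if c = c₀ then 1 else 0) + (1 - β) * p c
  have hq : ∀ c ≠ c₀, 0 ≤ q c := fun c hc => by
    simpa [q, hc] using mul_nonneg (sub_nonneg.2 hβ1) (hp0 c)
  have hsum : ∑ c, q c = 1 := by
    simp only [q, sum_add_distrib, ← mul_sum, sum_ite_eq', mem_univ, if_true, hpsum]
    ring
  obtain ⟨p', hp', hp'sum, hmix⟩ :=
    exists_eq_mix_indicator_of_le hq hsum (by simpa [q] using hβ'le)
  exact ⟨p', hp', hp'sum, fun c k => by rw [hγ k]; exact hmix c⟩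

/-- Proposition 1: if all items have the same true category `c₀`, then for any
`β' ≤ β + (1-β)·p c₀` there is an a priori distribution `p'` reproducing the
same assignment probabilities. -/
theorem stmt_0 {C : Type*} [Fintype C] [DecidableEq C] [Nonempty C]
    {N : ℕ} (hN : 1 ≤ N) (γ : Fin N → C)
    (β : ℝ) (hβ0 : 0 ≤ β) (hβ1 : β ≤ 1)
    (p : C → ℝ) (hp0 : ∀ c, 0 ≤ p c) (hp1 : ∀ c, p c ≤ 1) (hpsum : ∑ c, p c = 1)
    (c₀ : C) (hγ : ∀ k, γ k = c₀)
    (β' : ℝ) (hβ'0 : 0 ≤ β') (hβ'1 : β' ≤ 1)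
    (hβ'le : β' ≤ β + (1 - β) * p c₀) :
    ∃ p' : C → ℝ, (∀ c, 0 ≤ p' c ∧ p' c ≤ 1) ∧ (∑ c, p' c = 1) ∧
      ∀ (c : C) (k : Fin N),
        β * (if c = γ k then 1 else 0) + (1 - β) * p c
          = β' * (if c = γ k then 1 else 0) + (1 - β') * p' c :=
  stmt_0_general γ β hβ1 p hp0 hpsum c₀ hγ β' hβ'le
end

section
/- Let (β, γ, p) be a coder model with τ_c < 1 for all c ∈ C. Then e_{2,c} = e_{1,c}² holds for all c ∈ C if and only if β = 0. -/
/-!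
The defect `e₂ - e₁²` factors as `β² τ (1 - τ)`. The category of the first item occurs, so its
share `τ` is positive, and it is below `1` by hypothesis; hence the defect vanishes there only
when `β = 0`.
-/

theorem mix_second_moment_sub_sq {R : Type*} [CommRing R] (β t q : R) :
    β ^ 2 * t + 2 * β * (1 - β) * t * q + (1 - β) ^ 2 * q ^ 2 - (β * t + (1 - β) * q) ^ 2 =
      β ^ 2 * (t * (1 - t)) := by
  ring

theorem mix_second_moment_eq_sq_iff {R : Type*} [CommRing R] [NoZeroDivisors R] (β t q : R) :
    β ^ 2 * t + 2 * β * (1 - β) * t * q + (1 - β) ^ 2 * q ^ 2 = (β * t + (1 - β) * q) ^ 2 ↔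
      β = 0 ∨ t = 0 ∨ t = 1 := by
  rw [← sub_eq_zero, mix_second_moment_sub_sq, mul_eq_zero, mul_eq_zero, sub_eq_zero,
    pow_eq_zero_iff two_ne_zero, eq_comm (a := (1 : R))]

theorem card_filter_eq_apply_div_pos {C : Type*} [DecidableEq C] {N : ℕ} (γ : Fin N → C)
    (k₀ : Fin N) :
    0 < ((Finset.univ.filter (fun k : Fin N => γ k = γ k₀)).card : ℝ) / N := by
  have hcard : 0 < (Finset.univ.filter (fun k : Fin N => γ k = γ k₀)).card :=
    Finset.card_pos.mpr ⟨k₀, by simp⟩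
  have hN : 0 < N := Fin.pos k₀
  positivity

theorem stmt_3_general {C : Type*} [DecidableEq C]
    {N : ℕ} (hN : 1 ≤ N) (γ : Fin N → C)
    (β : ℝ)
    (p : C → ℝ)
    (τ : C → ℝ)
    (hτ : ∀ c, τ c = ((Finset.univ.filter (fun k : Fin N => γ k = c)).card : ℝ) / (N : ℝ))
    (e1 : C → ℝ) (he1 : ∀ c, e1 c = β * τ c + (1 - β) * p c)
    (e2 : C → ℝ)
    (he2 : ∀ c, e2 c = β ^ 2 * τ c + 2 * β * (1 - β) * τ c * p c + (1 - β) ^ 2 * p c ^ 2)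
    (hτlt : ∀ c, τ c < 1) :
    (∀ c, e2 c = e1 c ^ 2) ↔ β = 0 := by
  have key : ∀ c, e2 c = e1 c ^ 2 ↔ β = 0 ∨ τ c = 0 ∨ τ c = 1 := fun c => by
    rw [he1, he2, mix_second_moment_eq_sq_iff]
  refine ⟨fun h => ?_, fun hβ c => (key c).2 (Or.inl hβ)⟩
  set c₀ := γ ⟨0, hN⟩
  have hτpos : 0 < τ c₀ := hτ c₀ ▸ card_filter_eq_apply_div_pos γ ⟨0, hN⟩
  rcases (key c₀).1 (h c₀) with hβ | hτ0 | hτ1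
  · exact hβ
  · exact absurd hτ0 hτpos.ne'
  · exact absurd hτ1 (hτlt c₀).ne

/-- Proposition 2, part 2. -/
theorem stmt_3 {C : Type*} [Fintype C] [DecidableEq C] [Nonempty C]
    {N : ℕ} (hN : 1 ≤ N) (γ : Fin N → C)
    (β : ℝ) (hβ0 : 0 ≤ β) (hβ1 : β ≤ 1)
    (p : C → ℝ) (hp0 : ∀ c, 0 ≤ p c) (hp1 : ∀ c, p c ≤ 1) (hpsum : ∑ c, p c = 1)
    (τ : C → ℝ)
    (hτ : ∀ c, τ c = ((Finset.univ.filter (fun k : Fin N => γ k = c)).card : ℝ) / (N : ℝ))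
    (e1 : C → ℝ) (he1 : ∀ c, e1 c = β * τ c + (1 - β) * p c)
    (e2 : C → ℝ)
    (he2 : ∀ c, e2 c = β ^ 2 * τ c + 2 * β * (1 - β) * τ c * p c + (1 - β) ^ 2 * p c ^ 2)
    (hτlt : ∀ c, τ c < 1) :
    (∀ c, e2 c = e1 c ^ 2) ↔ β = 0 :=
  stmt_3_general hN γ β p τ hτ e1 he1 e2 he2 hτlt
end

section
/- Let (β, γ, p) be a coder model with τ_c < 1 for all c ∈ C, and suppose e_{2,c₀} ≠ e_{1,c₀}² for some c₀ ∈ C. Then e_{2,c₀} > e_{1,c₀}², β = √((e_{2,c₀} − e_{1,c₀}²)/(τ_{c₀}·(1−τ_{c₀}))), and if moreover β < 1, then p_{c₀} = (e_{1,c₀} − β·τ_{c₀})/(1−β). -/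
/-!
The second moment minus the squared first moment is the variance of the coder's output,
`e₂ - e₁² = β² τ (1 - τ)`: the prior `p` cancels out. Since `0 ≤ τ < 1` this is nonnegative, so
`e₂ ≠ e₁²` forces it to be positive; dividing by `τ (1 - τ)` and taking the square root returns
`β`, after which `e₁ = β τ + (1 - β) p` is solved for `p`.
-/

lemma coder_moment_sub_sq (β τ p : ℝ) :
    (β ^ 2 * τ + 2 * β * (1 - β) * τ * p + (1 - β) ^ 2 * p ^ 2) - (β * τ + (1 - β) * p) ^ 2
      = β ^ 2 * (τ * (1 - τ)) := by
  ring

lemma Real.sqrt_sq_mul_div_self {β v : ℝ} (hβ : 0 ≤ β) (hv : v ≠ 0) :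
    √(β ^ 2 * v / v) = β := by
  rw [mul_div_cancel_right₀ _ hv, Real.sqrt_sq hβ]

lemma eq_div_of_mix_eq {β τ p e : ℝ} (he : e = β * τ + (1 - β) * p) (hβ : β ≠ 1) :
    p = (e - β * τ) / (1 - β) :=
  eq_div_of_mul_eq (sub_ne_zero.mpr hβ.symm) (by rw [he]; ring)

theorem stmt_4_general {C : Type*} [DecidableEq C]
    {N : ℕ} (γ : Fin N → C)
    (β : ℝ) (hβ0 : 0 ≤ β)
    (p : C → ℝ)
    (τ : C → ℝ)
    (hτ : ∀ c, τ c = ((Finset.univ.filter (fun k : Fin N => γ k = c)).card : ℝ) / (N : ℝ))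
    (e1 : C → ℝ) (he1 : ∀ c, e1 c = β * τ c + (1 - β) * p c)
    (e2 : C → ℝ)
    (he2 : ∀ c, e2 c = β ^ 2 * τ c + 2 * β * (1 - β) * τ c * p c + (1 - β) ^ 2 * p c ^ 2)
    (hτlt : ∀ c, τ c < 1)
    (c₀ : C) (h : e2 c₀ ≠ e1 c₀ ^ 2) :
    e1 c₀ ^ 2 < e2 c₀ ∧
    β = Real.sqrt ((e2 c₀ - e1 c₀ ^ 2) / (τ c₀ * (1 - τ c₀))) ∧
    (β < 1 → p c₀ = (e1 c₀ - β * τ c₀) / (1 - β)) := by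
  have hvar : e2 c₀ - e1 c₀ ^ 2 = β ^ 2 * (τ c₀ * (1 - τ c₀)) := by
    rw [he1, he2]; exact coder_moment_sub_sq β (τ c₀) (p c₀)
  have hτ0 : 0 ≤ τ c₀ := by rw [hτ]; positivity
  have hvar_pos : 0 < β ^ 2 * (τ c₀ * (1 - τ c₀)) := by
    refine lt_of_le_of_ne (by have := sub_nonneg.mpr (hτlt c₀).le; positivity) ?_
    rw [← hvar]; exact (sub_ne_zero.mpr h).symm
  have hv : τ c₀ * (1 - τ c₀) ≠ 0 := right_ne_zero_of_mul hvar_pos.ne'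
  refine ⟨sub_pos.mp (hvar ▸ hvar_pos), ?_, fun hβ1 => eq_div_of_mix_eq (he1 c₀) hβ1.ne⟩
  rw [hvar, Real.sqrt_sq_mul_div_self hβ0 hv]

/-- Proposition 2, part 3. -/
theorem stmt_4 {C : Type*} [Fintype C] [DecidableEq C] [Nonempty C]
    {N : ℕ} (hN : 1 ≤ N) (γ : Fin N → C)
    (β : ℝ) (hβ0 : 0 ≤ β) (hβ1 : β ≤ 1)
    (p : C → ℝ) (hp0 : ∀ c, 0 ≤ p c) (hp1 : ∀ c, p c ≤ 1) (hpsum : ∑ c, p c = 1)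
    (τ : C → ℝ)
    (hτ : ∀ c, τ c = ((Finset.univ.filter (fun k : Fin N => γ k = c)).card : ℝ) / (N : ℝ))
    (e1 : C → ℝ) (he1 : ∀ c, e1 c = β * τ c + (1 - β) * p c)
    (e2 : C → ℝ)
    (he2 : ∀ c, e2 c = β ^ 2 * τ c + 2 * β * (1 - β) * τ c * p c + (1 - β) ^ 2 * p c ^ 2)
    (hτlt : ∀ c, τ c < 1)
    (c₀ : C) (h : e2 c₀ ≠ e1 c₀ ^ 2) :
    e1 c₀ ^ 2 < e2 c₀ ∧
    β = Real.sqrt ((e2 c₀ - e1 c₀ ^ 2) / (τ c₀ * (1 - τ c₀))) ∧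
    (β < 1 → p c₀ = (e1 c₀ - β * τ c₀) / (1 - β)) :=
  stmt_4_general γ β hβ0 p τ hτ e1 he1 e2 he2 hτlt c₀ h
end

section
/- Let (β, γ, p) be a coder model and suppose there are real numbers π₀, π₁ with π₀ ≤ p_c ≤ π₁ < 1 for all c ∈ C. Let e₂ := Σ_{c∈C} e_{2,c}. Then √(max(0, e₂ − π₁)/(1−π₁)) ≤ β ≤ √((e₂ − π₀)/(1−π₀)). -/
/-!
Since `∑ τ = ∑ p = 1`, `e₂ = β² + 2β(1-β)·∑ τ_c p_c + (1-β)²·∑ p_c²`, and both sums are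
averages of the values `p_c` (with weights `τ` and `p`), hence lie in `[π₀, π₁]`.
As `2β(1-β) + (1-β)² = 1 - β²`, this pins `e₂` between `β² + π₀(1-β²)` and `β² + π₁(1-β²)`;
solving these two inequalities for `β²` gives the two bounds.
-/

open Finset

section WeightedAverage

variable {ι R : Type*} [Fintype ι] [Semiring R] [PartialOrder R] [IsOrderedRing R]
  {w f : ι → R} {a b : R}

theorem Fintype.sum_mul_le_of_le (hw : ∀ i, 0 ≤ w i) (hw1 : ∑ i, w i = 1)
    (hf : ∀ i, f i ≤ b) :
    ∑ i, w i * f i ≤ b :=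
  calc ∑ i, w i * f i ≤ ∑ i, w i * b :=
        sum_le_sum fun i _ => mul_le_mul_of_nonneg_left (hf i) (hw i)
    _ = b := by rw [← sum_mul, hw1, one_mul]

theorem Fintype.le_sum_mul_of_le (hw : ∀ i, 0 ≤ w i) (hw1 : ∑ i, w i = 1)
    (hf : ∀ i, a ≤ f i) :
    a ≤ ∑ i, w i * f i :=
  calc a = ∑ i, w i * a := by rw [← sum_mul, hw1, one_mul]
    _ ≤ ∑ i, w i * f i := sum_le_sum fun i _ => mul_le_mul_of_nonneg_left (hf i) (hw i)

end WeightedAverage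

theorem Fintype.sum_card_fiber_div_card {α β K : Type*} [Fintype α] [Nonempty α] [Fintype β]
    [DecidableEq β] [DivisionSemiring K] [CharZero K] (f : α → β) :
    ∑ b, (#{a | f a = b} : K) / Fintype.card α = 1 := by
  rw [← sum_div, ← Nat.cast_sum, ← card_eq_sum_card_fiberwise fun a _ => mem_univ (f a),
    card_univ, div_self (Nat.cast_ne_zero.2 Fintype.card_ne_zero)]

theorem sq_add_cross_add_sq_mem_Icc {β x y π₀ π₁ : ℝ} (hβ0 : 0 ≤ β) (hβ1 : β ≤ 1)
    (hx : x ∈ Set.Icc π₀ π₁) (hy : y ∈ Set.Icc π₀ π₁) :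
    β ^ 2 + 2 * β * (1 - β) * x + (1 - β) ^ 2 * y ∈
      Set.Icc (β ^ 2 + π₀ * (1 - β ^ 2)) (β ^ 2 + π₁ * (1 - β ^ 2)) := by
  have hcross : 0 ≤ 2 * β * (1 - β) := by nlinarith
  have hsq : 0 ≤ (1 - β) ^ 2 := sq_nonneg _
  obtain ⟨hx0, hx1⟩ := hx
  obtain ⟨hy0, hy1⟩ := hy
  constructor
  · nlinarith [mul_le_mul_of_nonneg_left hx0 hcross, mul_le_mul_of_nonneg_left hy0 hsq]
  · nlinarith [mul_le_mul_of_nonneg_left hx1 hcross, mul_le_mul_of_nonneg_left hy1 hsq]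

theorem sqrt_max_sub_div_le {β e π : ℝ} (hβ : 0 ≤ β) (hπ : π < 1)
    (he : e ≤ β ^ 2 + π * (1 - β ^ 2)) :
    Real.sqrt (max 0 (e - π) / (1 - π)) ≤ β := by
  refine Real.sqrt_le_iff.2 ⟨hβ, ?_⟩
  rw [div_le_iff₀ (by linarith)]
  exact max_le (by nlinarith) (by nlinarith)

theorem le_sqrt_sub_div {β e π : ℝ} (hπ : π < 1) (he : β ^ 2 + π * (1 - β ^ 2) ≤ e) :
    β ≤ Real.sqrt ((e - π) / (1 - π)) := by
  refine Real.le_sqrt_of_sq_le ?_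
  rw [le_div_iff₀ (by linarith)]
  nlinarith

theorem stmt_5_general {C : Type*} [Fintype C] [DecidableEq C]
    {N : ℕ} (hN : 1 ≤ N) (γ : Fin N → C)
    (β : ℝ) (hβ0 : 0 ≤ β) (hβ1 : β ≤ 1)
    (p : C → ℝ) (hp0 : ∀ c, 0 ≤ p c) (hpsum : ∑ c, p c = 1)
    (τ : C → ℝ)
    (hτ : ∀ c, τ c = ((Finset.univ.filter (fun k : Fin N => γ k = c)).card : ℝ) / (N : ℝ))
    (e2 : C → ℝ)
    (he2 : ∀ c, e2 c = β ^ 2 * τ c + 2 * β * (1 - β) * τ c * p c + (1 - β) ^ 2 * p c ^ 2)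
    (π₀ π₁ : ℝ) (hlo : ∀ c, π₀ ≤ p c) (hhi : ∀ c, p c ≤ π₁) (hπ₁ : π₁ < 1) :
    Real.sqrt (max 0 ((∑ c, e2 c) - π₁) / (1 - π₁)) ≤ β ∧
    β ≤ Real.sqrt (((∑ c, e2 c) - π₀) / (1 - π₀)) := by
  have : Nonempty (Fin N) := ⟨⟨0, hN⟩⟩
  have hτ0 : ∀ c, 0 ≤ τ c := fun c => by rw [hτ c]; positivity
  have hτsum : ∑ c, τ c = 1 := by
    simpa only [hτ, Fintype.card_fin] using Fintype.sum_card_fiber_div_card (K := ℝ) γ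
  have hτp : ∑ c, τ c * p c ∈ Set.Icc π₀ π₁ :=
    ⟨Fintype.le_sum_mul_of_le hτ0 hτsum hlo, Fintype.sum_mul_le_of_le hτ0 hτsum hhi⟩
  have hpp : ∑ c, p c * p c ∈ Set.Icc π₀ π₁ :=
    ⟨Fintype.le_sum_mul_of_le hp0 hpsum hlo, Fintype.sum_mul_le_of_le hp0 hpsum hhi⟩
  have he2sum : ∑ c, e2 c
      = β ^ 2 + 2 * β * (1 - β) * ∑ c, τ c * p c + (1 - β) ^ 2 * ∑ c, p c * p c := by
    have he2' : ∀ c,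
        e2 c = β ^ 2 * τ c + 2 * β * (1 - β) * (τ c * p c) + (1 - β) ^ 2 * (p c * p c) :=
      fun c => by rw [he2]; ring
    rw [sum_congr rfl fun c _ => he2' c, sum_add_distrib, sum_add_distrib,
      ← mul_sum, ← mul_sum, ← mul_sum, hτsum, mul_one]
  obtain ⟨hlower, hupper⟩ := he2sum ▸ sq_add_cross_add_sq_mem_Icc hβ0 hβ1 hτp hpp
  exact ⟨sqrt_max_sub_div_le hβ0 hπ₁ hupper,
    le_sqrt_sub_div (hpp.1.trans hpp.2 |>.trans_lt hπ₁) hlower⟩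

/-- Proposition 3: estimates for β from bounds on the a priori distribution. -/
theorem stmt_5 {C : Type*} [Fintype C] [DecidableEq C] [Nonempty C]
    {N : ℕ} (hN : 1 ≤ N) (γ : Fin N → C)
    (β : ℝ) (hβ0 : 0 ≤ β) (hβ1 : β ≤ 1)
    (p : C → ℝ) (hp0 : ∀ c, 0 ≤ p c) (hp1 : ∀ c, p c ≤ 1) (hpsum : ∑ c, p c = 1)
    (τ : C → ℝ)
    (hτ : ∀ c, τ c = ((Finset.univ.filter (fun k : Fin N => γ k = c)).card : ℝ) / (N : ℝ))
    (e2 : C → ℝ)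
    (he2 : ∀ c, e2 c = β ^ 2 * τ c + 2 * β * (1 - β) * τ c * p c + (1 - β) ^ 2 * p c ^ 2)
    (π₀ π₁ : ℝ) (hlo : ∀ c, π₀ ≤ p c) (hhi : ∀ c, p c ≤ π₁) (hπ₁ : π₁ < 1) :
    Real.sqrt (max 0 ((∑ c, e2 c) - π₁) / (1 - π₁)) ≤ β ∧
    β ≤ Real.sqrt (((∑ c, e2 c) - π₀) / (1 - π₀)) :=
  stmt_5_general hN γ β hβ0 hβ1 p hp0 hpsum τ hτ e2 he2 π₀ π₁ hlo hhi hπ₁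
end

section
/- Let (β, γ, p) be a coder model with m := #C ≥ 2 and suppose p is the uniform distribution, i.e. p_c = 1/m for all c ∈ C. Let e₂ := Σ_{c∈C} e_{2,c}. Then β² = (e₂ − 1/m)/(1 − 1/m). -/
/-!
The category frequencies `τ` sum to one, so `e₂ = β² + 2β(1 - β) ∑ τ_c p_c + (1 - β)² ∑ p_c²`.
For uniform `p` both sums equal `1/m`, giving `e₂ = β² + (1 - β²)/m = β² (1 - 1/m) + 1/m`,
which is solved for `β²` since `m ≠ 1`.
-/

open Finset

theorem sum_card_filter_div_card_eq_one {α C : Type*} [Fintype α] [Nonempty α] [Fintype C]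
    [DecidableEq C] (γ : α → C) :
    ∑ c, (#{k | γ k = c} : ℝ) / Fintype.card α = 1 := by
  have hfibres : ∑ c, (#{k | γ k = c} : ℝ) = Fintype.card α := by
    exact_mod_cast (card_eq_sum_card_fiberwise (f := γ) (s := univ) (t := univ)
      fun _ _ => mem_univ _).symm
  rw [← sum_div, hfibres, div_self (by positivity)]

theorem sum_second_moment_eq {C : Type*} [Fintype C] (β : ℝ) (τ p : C → ℝ)
    (hτ : ∑ c, τ c = 1) :
    ∑ c, (β ^ 2 * τ c + 2 * β * (1 - β) * τ c * p c + (1 - β) ^ 2 * p c ^ 2)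
      = β ^ 2 + 2 * β * (1 - β) * ∑ c, τ c * p c + (1 - β) ^ 2 * ∑ c, p c ^ 2 := by
  simp only [sum_add_distrib, ← mul_sum, mul_assoc, hτ, mul_one]

theorem sum_second_moment_uniform {C : Type*} [Fintype C] [Nonempty C] (β : ℝ) (τ : C → ℝ)
    (hτ : ∑ c, τ c = 1) :
    ∑ c, (β ^ 2 * τ c + 2 * β * (1 - β) * τ c * (1 / Fintype.card C : ℝ)
        + (1 - β) ^ 2 * (1 / Fintype.card C : ℝ) ^ 2)
      = β ^ 2 * (1 - 1 / Fintype.card C) + 1 / Fintype.card C := by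
  have hm : (Fintype.card C : ℝ) ≠ 0 := by positivity
  rw [sum_second_moment_eq β τ _ hτ, ← sum_mul, hτ, sum_const, card_univ, nsmul_eq_mul]
  field_simp
  ring

theorem stmt_6_general {C : Type*} [Fintype C] [DecidableEq C]
    {N : ℕ} (hN : 1 ≤ N) (γ : Fin N → C)
    (β : ℝ)
    (p : C → ℝ)
    (τ : C → ℝ)
    (hτ : ∀ c, τ c = ((Finset.univ.filter (fun k : Fin N => γ k = c)).card : ℝ) / (N : ℝ))
    (e2 : C → ℝ)
    (he2 : ∀ c, e2 c = β ^ 2 * τ c + 2 * β * (1 - β) * τ c * p c + (1 - β) ^ 2 * p c ^ 2)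
    (hm : 2 ≤ Fintype.card C)
    (hunif : ∀ c, p c = 1 / (Fintype.card C : ℝ)) :
    β ^ 2 = ((∑ c, e2 c) - 1 / (Fintype.card C : ℝ)) / (1 - 1 / (Fintype.card C : ℝ)) := by
  have : Nonempty (Fin N) := Fin.pos_iff_nonempty.mp hN
  have : Nonempty C := Fintype.card_pos_iff.mp (by omega)
  have hτsum : ∑ c, τ c = 1 := by
    simpa only [hτ, Fintype.card_fin] using sum_card_filter_div_card_eq_one γ
  have he2sum : ∑ c, e2 c = β ^ 2 * (1 - 1 / Fintype.card C) + 1 / Fintype.card C := by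
    simp only [he2, hunif]
    exact sum_second_moment_uniform β τ hτsum
  have hm' : (1 : ℝ) - 1 / Fintype.card C ≠ 0 := by
    rw [sub_ne_zero, ne_comm, one_div, inv_ne_one]
    exact_mod_cast (by omega : Fintype.card C ≠ 1)
  rw [he2sum, add_sub_cancel_right, mul_div_cancel_right₀ _ hm']

/-- The S-value formula in the uniform case. -/
theorem stmt_6 {C : Type*} [Fintype C] [DecidableEq C] [Nonempty C]
    {N : ℕ} (hN : 1 ≤ N) (γ : Fin N → C)
    (β : ℝ) (hβ0 : 0 ≤ β) (hβ1 : β ≤ 1)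
    (p : C → ℝ) (hp0 : ∀ c, 0 ≤ p c) (hp1 : ∀ c, p c ≤ 1) (hpsum : ∑ c, p c = 1)
    (τ : C → ℝ)
    (hτ : ∀ c, τ c = ((Finset.univ.filter (fun k : Fin N => γ k = c)).card : ℝ) / (N : ℝ))
    (e2 : C → ℝ)
    (he2 : ∀ c, e2 c = β ^ 2 * τ c + 2 * β * (1 - β) * τ c * p c + (1 - β) ^ 2 * p c ^ 2)
    (hm : 2 ≤ Fintype.card C)
    (hunif : ∀ c, p c = 1 / (Fintype.card C : ℝ)) :
    β ^ 2 = ((∑ c, e2 c) - 1 / (Fintype.card C : ℝ)) / (1 - 1 / (Fintype.card C : ℝ)) :=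
  stmt_6_general hN γ β p τ hτ e2 he2 hm hunif
end

section
/- Let (β, γ, p) be a coder model with τ_c < 1 for all c ∈ C, and suppose c ∈ C satisfies 0 < p_c < 1. Then, writing A := (1 − e_{1,c})/(1 − p_c) + e_{1,c}/p_c, one has β = 1 − A/2 + √(A²/4 − (e_{1,c} − e_{2,c})/(p_c·(1 − p_c))). -/
/-!
Write `q = p c`, `t = τ c`. Substituting the expectation values shows that `y = 1 - β` is a root
of `y² - A y + (e₁ - e₂)/(q(1 - q))`, and `A/2 - (1 - β) = β (q(1 - t) + t(1 - q)) / (2q(1 - q))`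
is nonnegative because `0 ≤ t ≤ 1`. So `1 - β` is the smaller root, which is the claimed formula.
-/

theorem eq_half_sub_sqrt_of_quadratic {y A K : ℝ} (hroot : y ^ 2 - A * y + K = 0)
    (hle : y ≤ A / 2) : y = A / 2 - √(A ^ 2 / 4 - K) := by
  have hdisc : A ^ 2 / 4 - K = (A / 2 - y) ^ 2 := by linear_combination -hroot
  rw [hdisc, Real.sqrt_sq (by linarith)]
  ring

section CoderExpectations

variable {β q t e₁ e₂ : ℝ}

theorem coder_one_sub_isRoot (hq0 : q ≠ 0) (hq1 : 1 - q ≠ 0)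
    (he₁ : e₁ = β * t + (1 - β) * q)
    (he₂ : e₂ = β ^ 2 * t + 2 * β * (1 - β) * t * q + (1 - β) ^ 2 * q ^ 2) :
    (1 - β) ^ 2 - ((1 - e₁) / (1 - q) + e₁ / q) * (1 - β) + (e₁ - e₂) / (q * (1 - q)) = 0 := by
  subst he₁ he₂
  field_simp
  ring

theorem coder_one_sub_le_half (hβ : 0 ≤ β) (hq0 : 0 < q) (hq1 : q < 1) (ht0 : 0 ≤ t)
    (ht1 : t ≤ 1) (he₁ : e₁ = β * t + (1 - β) * q) :
    1 - β ≤ ((1 - e₁) / (1 - q) + e₁ / q) / 2 := by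
  have h1q : 0 < 1 - q := by linarith
  have hgap : ((1 - e₁) / (1 - q) + e₁ / q) / 2 - (1 - β)
      = β * (q * (1 - t) + t * (1 - q)) / (2 * q * (1 - q)) := by
    subst he₁
    field_simp
    ring
  have hgap_nonneg : 0 ≤ β * (q * (1 - t) + t * (1 - q)) / (2 * q * (1 - q)) :=
    div_nonneg (mul_nonneg hβ (add_nonneg (mul_nonneg hq0.le (sub_nonneg.2 ht1))
      (mul_nonneg ht0 h1q.le))) (by positivity)
  linarith

end CoderExpectations

theorem stmt_10_general {C : Type*} [DecidableEq C]
    {N : ℕ} (γ : Fin N → C)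
    (β : ℝ) (hβ0 : 0 ≤ β)
    (p : C → ℝ)
    (τ : C → ℝ)
    (hτ : ∀ c, τ c = ((Finset.univ.filter (fun k : Fin N => γ k = c)).card : ℝ) / (N : ℝ))
    (e1 : C → ℝ) (he1 : ∀ c, e1 c = β * τ c + (1 - β) * p c)
    (e2 : C → ℝ)
    (he2 : ∀ c, e2 c = β ^ 2 * τ c + 2 * β * (1 - β) * τ c * p c + (1 - β) ^ 2 * p c ^ 2)
    (hτlt : ∀ c, τ c < 1)
    (c : C) (hpc0 : 0 < p c) (hpc1 : p c < 1) :
    β = 1 - ((1 - e1 c) / (1 - p c) + e1 c / p c) / 2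
        + Real.sqrt (((1 - e1 c) / (1 - p c) + e1 c / p c) ^ 2 / 4
            - (e1 c - e2 c) / (p c * (1 - p c))) := by
  have hτ0 : 0 ≤ τ c := by rw [hτ]; positivity
  have hroot := coder_one_sub_isRoot hpc0.ne' (sub_ne_zero.2 hpc1.ne') (he1 c) (he2 c)
  have hle := coder_one_sub_le_half hβ0 hpc0 hpc1 hτ0 (hτlt c).le (he1 c)
  linarith [eq_half_sub_sqrt_of_quadratic hroot hle]

/-- Proposition 4, part 1 (third case). -/
theorem stmt_10 {C : Type*} [Fintype C] [DecidableEq C] [Nonempty C]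
    {N : ℕ} (hN : 1 ≤ N) (γ : Fin N → C)
    (β : ℝ) (hβ0 : 0 ≤ β) (hβ1 : β ≤ 1)
    (p : C → ℝ) (hp0 : ∀ c, 0 ≤ p c) (hp1 : ∀ c, p c ≤ 1) (hpsum : ∑ c, p c = 1)
    (τ : C → ℝ)
    (hτ : ∀ c, τ c = ((Finset.univ.filter (fun k : Fin N => γ k = c)).card : ℝ) / (N : ℝ))
    (e1 : C → ℝ) (he1 : ∀ c, e1 c = β * τ c + (1 - β) * p c)
    (e2 : C → ℝ)
    (he2 : ∀ c, e2 c = β ^ 2 * τ c + 2 * β * (1 - β) * τ c * p c + (1 - β) ^ 2 * p c ^ 2)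
    (hτlt : ∀ c, τ c < 1)
    (c : C) (hpc0 : 0 < p c) (hpc1 : p c < 1) :
    β = 1 - ((1 - e1 c) / (1 - p c) + e1 c / p c) / 2
        + Real.sqrt (((1 - e1 c) / (1 - p c) + e1 c / p c) ^ 2 / 4
            - (e1 c - e2 c) / (p c * (1 - p c))) :=
  stmt_10_general γ β hβ0 p τ hτ e1 he1 e2 he2 hτlt c hpc0 hpc1
end

section
/- Let (β, γ, p) be a coder model with τ_c < 1 for all c ∈ C, let C* := {c ∈ C : e_{2,c} ≠ e_{1,c}²}, and assume #C* = 2. Then for any c ∈ C*, setting a := e_{2,c} − e_{1,c}² and b := (e_{3,c} − e_{1,c}³)/(e_{2,c} − e_{1,c}²) − 3·e_{1,c}, one has β = √(4a + b²). -/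
/-!
For each category the second and third central moments factor through τ(1 − τ):
a = β²τ(1 − τ) and e₃ − e₁³ = a·(β(1 + τ) + 3(1 − β)p), so b = β(1 − 2τ) whenever a ≠ 0.
Then 4a + b² = β²(4τ(1 − τ) + (1 − 2τ)²) = β².
-/

section CoderMoments

variable {β τ p e1 e2 e3 : ℝ}

lemma coder_e2_sub_e1_sq (he1 : e1 = β * τ + (1 - β) * p)
    (he2 : e2 = β ^ 2 * τ + 2 * β * (1 - β) * τ * p + (1 - β) ^ 2 * p ^ 2) :
    e2 - e1 ^ 2 = β ^ 2 * τ * (1 - τ) := by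
  subst he1 he2; ring

lemma coder_e3_sub_e1_cube (he1 : e1 = β * τ + (1 - β) * p)
    (he2 : e2 = β ^ 2 * τ + 2 * β * (1 - β) * τ * p + (1 - β) ^ 2 * p ^ 2)
    (he3 : e3 = β ^ 3 * τ + 3 * β ^ 2 * (1 - β) * τ * p
      + 3 * β * (1 - β) ^ 2 * τ * p ^ 2 + (1 - β) ^ 3 * p ^ 3) :
    e3 - e1 ^ 3 = (e2 - e1 ^ 2) * (β * (1 + τ) + 3 * (1 - β) * p) := by
  subst he1 he2 he3; ring

lemma coder_skew_term_eq (he1 : e1 = β * τ + (1 - β) * p)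
    (he2 : e2 = β ^ 2 * τ + 2 * β * (1 - β) * τ * p + (1 - β) ^ 2 * p ^ 2)
    (he3 : e3 = β ^ 3 * τ + 3 * β ^ 2 * (1 - β) * τ * p
      + 3 * β * (1 - β) ^ 2 * τ * p ^ 2 + (1 - β) ^ 3 * p ^ 3)
    (hvar : e2 ≠ e1 ^ 2) :
    (e3 - e1 ^ 3) / (e2 - e1 ^ 2) - 3 * e1 = β * (1 - 2 * τ) := by
  rw [coder_e3_sub_e1_cube he1 he2 he3, mul_div_cancel_left₀ _ (sub_ne_zero.mpr hvar), he1]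
  ring

theorem coder_beta_eq_sqrt (hβ : 0 ≤ β) (he1 : e1 = β * τ + (1 - β) * p)
    (he2 : e2 = β ^ 2 * τ + 2 * β * (1 - β) * τ * p + (1 - β) ^ 2 * p ^ 2)
    (he3 : e3 = β ^ 3 * τ + 3 * β ^ 2 * (1 - β) * τ * p
      + 3 * β * (1 - β) ^ 2 * τ * p ^ 2 + (1 - β) ^ 3 * p ^ 3)
    (hvar : e2 ≠ e1 ^ 2) :
    β = Real.sqrt (4 * (e2 - e1 ^ 2) + ((e3 - e1 ^ 3) / (e2 - e1 ^ 2) - 3 * e1) ^ 2) := by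
  rw [coder_skew_term_eq he1 he2 he3 hvar, coder_e2_sub_e1_sq he1 he2]
  have hsum : 4 * (β ^ 2 * τ * (1 - τ)) + (β * (1 - 2 * τ)) ^ 2 = β ^ 2 := by ring
  rw [hsum, Real.sqrt_sq hβ]

end CoderMoments

theorem stmt_15_general {C : Type*} [Fintype C]
    (β : ℝ) (hβ0 : 0 ≤ β)
    (p : C → ℝ)
    (τ : C → ℝ)
    (e1 : C → ℝ) (he1 : ∀ c, e1 c = β * τ c + (1 - β) * p c)
    (e2 : C → ℝ)
    (he2 : ∀ c, e2 c = β ^ 2 * τ c + 2 * β * (1 - β) * τ c * p c + (1 - β) ^ 2 * p c ^ 2)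
    (e3 : C → ℝ)
    (he3 : ∀ c, e3 c = β ^ 3 * τ c + 3 * β ^ 2 * (1 - β) * τ c * p c
      + 3 * β * (1 - β) ^ 2 * τ c * p c ^ 2 + (1 - β) ^ 3 * p c ^ 3) :
    ∀ c ∈ Finset.univ.filter (fun c => e2 c ≠ e1 c ^ 2),
      β = Real.sqrt (4 * (e2 c - e1 c ^ 2)
        + ((e3 c - e1 c ^ 3) / (e2 c - e1 c ^ 2) - 3 * e1 c) ^ 2) := fun c hc =>
  coder_beta_eq_sqrt hβ0 (he1 c) (he2 c) (he3 c) (Finset.mem_filter.mp hc).2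

/-- Theorem 1, part 3: the case #C* = 2. -/
theorem stmt_15 {C : Type*} [Fintype C] [DecidableEq C] [Nonempty C]
    {N : ℕ} (hN : 1 ≤ N) (γ : Fin N → C)
    (β : ℝ) (hβ0 : 0 ≤ β) (hβ1 : β ≤ 1)
    (p : C → ℝ) (hp0 : ∀ c, 0 ≤ p c) (hp1 : ∀ c, p c ≤ 1) (hpsum : ∑ c, p c = 1)
    (τ : C → ℝ)
    (hτ : ∀ c, τ c = ((Finset.univ.filter (fun k : Fin N => γ k = c)).card : ℝ) / (N : ℝ))
    (e1 : C → ℝ) (he1 : ∀ c, e1 c = β * τ c + (1 - β) * p c)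
    (e2 : C → ℝ)
    (he2 : ∀ c, e2 c = β ^ 2 * τ c + 2 * β * (1 - β) * τ c * p c + (1 - β) ^ 2 * p c ^ 2)
    (e3 : C → ℝ)
    (he3 : ∀ c, e3 c = β ^ 3 * τ c + 3 * β ^ 2 * (1 - β) * τ c * p c
      + 3 * β * (1 - β) ^ 2 * τ c * p c ^ 2 + (1 - β) ^ 3 * p c ^ 3)
    (hτlt : ∀ c, τ c < 1)
    (hcard : (Finset.univ.filter (fun c => e2 c ≠ e1 c ^ 2)).card = 2) :
    ∀ c ∈ Finset.univ.filter (fun c => e2 c ≠ e1 c ^ 2),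
      β = Real.sqrt (4 * (e2 c - e1 c ^ 2)
        + ((e3 c - e1 c ^ 3) / (e2 c - e1 c ^ 2) - 3 * e1 c) ^ 2) :=
  stmt_15_general β hβ0 p τ e1 he1 e2 he2 e3 he3
end

section
/- Let (β, γ, p) be a coder model with τ_c < 1 for all c ∈ C, let C* := {c ∈ C : e_{2,c} ≠ e_{1,c}²}, and assume #C* ≥ 3. Then β = (1/(#C* − 2)) · ( Σ_{c ∈ C*} (e_{3,c} − e_{1,c}³)/(e_{2,c} − e_{1,c}²) + 3·Σ_{c ∈ C \setminus C*} e_{1,c} − 3 ). -/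
/-!
The variance and the third central moment of a category's indicator both carry the factor
`β² τ_c (1 - τ_c)`: `e₂ - e₁² = β² τ (1 - τ)` and `e₃ - e₁³ = β² τ (1 - τ) (β (1 + τ) + 3 (1 - β) p)`.
Hence `C*` is nonempty only if `β ≠ 0`, and then, since `τ_c < 1`, a category lies outside `C*`
exactly when `τ_c = 0`. On `C*` the ratio of the two moments is `β (1 + τ_c) + 3 (1 - β) p_c`,
outside it `e₁ = (1 - β) p_c`; summing with `∑ τ = 1` and `∑ p = 1` gives `β (#C* - 2)`.
-/

open Finset

lemma sum_card_fiber_div_card {ι C : Type*} [Fintype ι] [Fintype C] [DecidableEq C]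
    (γ : ι → C) (hι : Fintype.card ι ≠ 0) :
    ∑ c, (#{k | γ k = c} : ℝ) / Fintype.card ι = 1 := by
  have hfib : ∑ c, #{k | γ k = c} = Fintype.card ι :=
    (card_eq_sum_card_fiberwise fun k _ => mem_univ (γ k)).symm
  rw [← sum_div, ← Nat.cast_sum, hfib, div_self (Nat.cast_ne_zero.2 hι)]

section Moments

variable (β τ p : ℝ)

lemma second_moment_sub_sq :
    β ^ 2 * τ + 2 * β * (1 - β) * τ * p + (1 - β) ^ 2 * p ^ 2 - (β * τ + (1 - β) * p) ^ 2
      = β ^ 2 * τ * (1 - τ) := by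
  ring

lemma third_moment_sub_cube :
    β ^ 3 * τ + 3 * β ^ 2 * (1 - β) * τ * p + 3 * β * (1 - β) ^ 2 * τ * p ^ 2
      + (1 - β) ^ 3 * p ^ 3 - (β * τ + (1 - β) * p) ^ 3
      = β ^ 2 * τ * (1 - τ) * (β * (1 + τ) + 3 * (1 - β) * p) := by
  ring

variable {β τ}

lemma eq_zero_of_sq_mul_mul_one_sub_eq_zero (hβ : β ≠ 0) (hτ : τ < 1)
    (h : β ^ 2 * τ * (1 - τ) = 0) : τ = 0 := by
  simp_all [sub_eq_zero, hτ.ne']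

end Moments

lemma sum_add_three_mul_sum_sdiff {ι : Type*} [Fintype ι] [DecidableEq ι] (S : Finset ι)
    (β : ℝ) (τ p : ι → ℝ) (hτ : ∑ c ∈ S, τ c = 1) (hp : ∑ c, p c = 1) :
    ∑ c ∈ S, (β * (1 + τ c) + 3 * (1 - β) * p c) + 3 * ∑ c ∈ univ \ S, (1 - β) * p c - 3
      = β * (#S - 2) := by
  have hsplit : ∑ c ∈ univ \ S, p c + ∑ c ∈ S, p c = 1 := by
    rw [sum_sdiff (subset_univ S), hp]
  simp only [sum_add_distrib, ← mul_sum, sum_const, nsmul_eq_mul, hτ]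
  linear_combination (3 - 3 * β) * hsplit

theorem stmt_16_general {C : Type*} [Fintype C] [DecidableEq C]
    {N : ℕ} (hN : 1 ≤ N) (γ : Fin N → C)
    (β : ℝ)
    (p : C → ℝ) (hpsum : ∑ c, p c = 1)
    (τ : C → ℝ)
    (hτ : ∀ c, τ c = ((Finset.univ.filter (fun k : Fin N => γ k = c)).card : ℝ) / (N : ℝ))
    (e1 : C → ℝ) (he1 : ∀ c, e1 c = β * τ c + (1 - β) * p c)
    (e2 : C → ℝ)
    (he2 : ∀ c, e2 c = β ^ 2 * τ c + 2 * β * (1 - β) * τ c * p c + (1 - β) ^ 2 * p c ^ 2)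
    (e3 : C → ℝ)
    (he3 : ∀ c, e3 c = β ^ 3 * τ c + 3 * β ^ 2 * (1 - β) * τ c * p c
      + 3 * β * (1 - β) ^ 2 * τ c * p c ^ 2 + (1 - β) ^ 3 * p c ^ 3)
    (hτlt : ∀ c, τ c < 1)
    (hcard : 3 ≤ (Finset.univ.filter (fun c => e2 c ≠ e1 c ^ 2)).card) :
    β = (1 / (((Finset.univ.filter (fun c => e2 c ≠ e1 c ^ 2)).card : ℝ) - 2))
      * ((∑ c ∈ Finset.univ.filter (fun c => e2 c ≠ e1 c ^ 2),
            (e3 c - e1 c ^ 3) / (e2 c - e1 c ^ 2))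
        + 3 * (∑ c ∈ Finset.univ \ Finset.univ.filter (fun c => e2 c ≠ e1 c ^ 2), e1 c)
        - 3) := by
  set S := univ.filter (fun c => e2 c ≠ e1 c ^ 2)
  have hvar (c : C) : e2 c - e1 c ^ 2 = β ^ 2 * τ c * (1 - τ c) := by
    rw [he1, he2]; exact second_moment_sub_sq ..
  have hβ : β ≠ 0 := by
    rintro rfl
    have hS : S = ∅ := filter_eq_empty_iff.2 fun c _ => by simpa [sub_eq_zero] using hvar c
    simp [hS] at hcard
  have hτ_sdiff (c : C) (hc : c ∉ S) : τ c = 0 :=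
    eq_zero_of_sq_mul_mul_one_sub_eq_zero hβ (hτlt c) (by rw [← hvar, sub_eq_zero]; simpa [S] using hc)
  have hτS : ∑ c ∈ S, τ c = 1 := by
    rw [sum_subset (subset_univ S) fun c _ => hτ_sdiff c, funext hτ]
    simpa using sum_card_fiber_div_card γ (by simp; omega)
  have hratio (c : C) (hc : c ∈ S) :
      (e3 c - e1 c ^ 3) / (e2 c - e1 c ^ 2) = β * (1 + τ c) + 3 * (1 - β) * p c := by
    have hne : β ^ 2 * τ c * (1 - τ c) ≠ 0 := hvar c ▸ sub_ne_zero.2 (mem_filter.1 hc).2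
    rw [hvar, he1, he3, third_moment_sub_cube, mul_div_cancel_left₀ _ hne]
  have he1_sdiff (c : C) (hc : c ∈ univ \ S) : e1 c = (1 - β) * p c := by
    rw [he1, hτ_sdiff c (mem_sdiff.1 hc).2]; ring
  have hS2 : (#S : ℝ) - 2 ≠ 0 := by
    have : (3 : ℝ) ≤ #S := by exact_mod_cast hcard
    linarith
  rw [sum_congr rfl hratio, sum_congr rfl he1_sdiff,
    sum_add_three_mul_sum_sdiff S β τ p hτS hpsum]
  field_simp

/-- Theorem 1, part 4: the case #C* ≥ 3, using triple coincidences. -/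
theorem stmt_16 {C : Type*} [Fintype C] [DecidableEq C] [Nonempty C]
    {N : ℕ} (hN : 1 ≤ N) (γ : Fin N → C)
    (β : ℝ) (hβ0 : 0 ≤ β) (hβ1 : β ≤ 1)
    (p : C → ℝ) (hp0 : ∀ c, 0 ≤ p c) (hp1 : ∀ c, p c ≤ 1) (hpsum : ∑ c, p c = 1)
    (τ : C → ℝ)
    (hτ : ∀ c, τ c = ((Finset.univ.filter (fun k : Fin N => γ k = c)).card : ℝ) / (N : ℝ))
    (e1 : C → ℝ) (he1 : ∀ c, e1 c = β * τ c + (1 - β) * p c)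
    (e2 : C → ℝ)
    (he2 : ∀ c, e2 c = β ^ 2 * τ c + 2 * β * (1 - β) * τ c * p c + (1 - β) ^ 2 * p c ^ 2)
    (e3 : C → ℝ)
    (he3 : ∀ c, e3 c = β ^ 3 * τ c + 3 * β ^ 2 * (1 - β) * τ c * p c
      + 3 * β * (1 - β) ^ 2 * τ c * p c ^ 2 + (1 - β) ^ 3 * p c ^ 3)
    (hτlt : ∀ c, τ c < 1)
    (hcard : 3 ≤ (Finset.univ.filter (fun c => e2 c ≠ e1 c ^ 2)).card) :
    β = (1 / (((Finset.univ.filter (fun c => e2 c ≠ e1 c ^ 2)).card : ℝ) - 2))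
      * ((∑ c ∈ Finset.univ.filter (fun c => e2 c ≠ e1 c ^ 2),
            (e3 c - e1 c ^ 3) / (e2 c - e1 c ^ 2))
        + 3 * (∑ c ∈ Finset.univ \ Finset.univ.filter (fun c => e2 c ≠ e1 c ^ 2), e1 c)
        - 3) :=
  stmt_16_general hN γ β p hpsum τ hτ e1 he1 e2 he2 e3 he3 hτlt hcard
end

section
/- Let (β, γ, p) be a coder model with τ_c < 1 for all c ∈ C, let C* := {c ∈ C : e_{2,c} ≠ e_{1,c}²}, and suppose C* = {c₁, ..., c_{m*}} (an injective enumeration) with m* ≥ 3. For i, j ∈ {1,...,m*} define ρ_{i,j} := (e_{2,c_i,c_j} − e_{1,c_i}·e_{1,c_j})/(e_{2,c_i,c_i} − e_{1,c_i}²). Then a vector λ ∈ ℝ^{m*} satisfies both (i) λ_i·ρ_{i,j} = λ_k·ρ_{k,j} for all i, j, k ∈ {1,...,m*} with i ≠ j and k ≠ j, and (ii) Σ_{i=1}^{m*} λ_i = m* − 1, if and only if λ_i = 1 − τ_{c_i} for all i. Moreover, for this solution, β = √( (Σ_{c∈C} (e_{2,c} − e_{1,c}²)) / (1 − Σ_{j=1}^{m*}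 (1 − λ_j)²) ). -/
/-!
In the coder model `e_{2,c} - e_{1,c}² = β²τ_c(1 - τ_c)` and, for `c ≠ d`,
`e_{2,c,d} - e_{1,c}e_{1,d} = -β²τ_c τ_d`: the a priori distribution `p` cancels.
Hence `C*` consists of the categories with `τ_c ≠ 0` (and forces `β ≠ 0`), the weights `τ_{c_i}`
sum to `1`, and `ρ_{i,j} = -τ_{c_j} / (1 - τ_{c_i})` for `i ≠ j`. Since `m* ≥ 3`, for any two indices
`i, k` there is a third index `j ≠ i, k`, so condition (i) says exactly that `λ_i / (1 - τ_{c_i})` does not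
depend on `i`, and (ii) forces this constant to be `1`. Finally
`Σ_c (e_{2,c} - e_{1,c}²) = β²(1 - Σ_c τ_c²)` with `Σ_c τ_c² < 1`.
-/

open Finset

theorem sum_card_fiber_div_card_eq_one {ι C : Type*} [Fintype ι] [Nonempty ι] [Fintype C]
    [DecidableEq C] (γ : ι → C) :
    ∑ c, (#{k | γ k = c} : ℝ) / Fintype.card ι = 1 := by
  rw [← sum_div, ← Nat.cast_sum, ← card_eq_sum_card_fiberwise (by simp), card_univ]
  exact div_self (by positivity)

theorem sum_sq_lt_one_of_sum_eq_one {ι : Type*} [Fintype ι] {x : ι → ℝ} (h0 : ∀ i, 0 ≤ x i)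
    (h1 : ∀ i, x i < 1) (hsum : ∑ i, x i = 1) : ∑ i, x i ^ 2 < 1 := by
  obtain ⟨i, -, hi⟩ := exists_ne_zero_of_sum_ne_zero (hsum ▸ one_ne_zero)
  calc ∑ i, x i ^ 2 < ∑ i, x i :=
        sum_lt_sum (fun j _ => by nlinarith [h0 j, h1 j])
          ⟨i, mem_univ _, by nlinarith [(h0 i).lt_of_ne' hi, h1 i]⟩
    _ = 1 := hsum

theorem Fintype.exists_ne_ne_of_two_lt_card {ι : Type*} [Fintype ι] (h : 2 < Fintype.card ι)
    (i k : ι) : ∃ j, j ≠ i ∧ j ≠ k := by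
  obtain ⟨a, b, c, hab, hac, hbc⟩ := Fintype.two_lt_card_iff.1 h
  by_contra! hne
  rcases eq_or_ne a i with rfl | ha
  · exact hbc ((hne b hab.symm).trans (hne c hac.symm).symm)
  rcases eq_or_ne b i with rfl | hb
  · exact hac ((hne a hab).trans (hne c hbc.symm).symm)
  exact hab ((hne a ha).trans (hne b hb).symm)

theorem eq_of_forall_mul_eq_mul_of_sum_eq {ι K : Type*} [Fintype ι] [CommRing K] [IsDomain K]
    {x y : ι → K} (h : ∀ i k, x i * y k = x k * y i) (hsum : ∑ i, x i = ∑ i, y i)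
    (hy : ∑ i, y i ≠ 0) : x = y := by
  funext i
  refine mul_right_cancel₀ hy ?_
  calc x i * ∑ k, y k = ∑ k, x k * y i := by rw [mul_sum]; exact sum_congr rfl fun k _ => h i k
    _ = y i * ∑ k, y k := by rw [← sum_mul, hsum, mul_comm]

theorem mul_neg_div_eq_mul_neg_div_iff {K : Type*} [Field K] {a b w u v : K} (hw : w ≠ 0)
    (hu : u ≠ 0) (hv : v ≠ 0) : a * (-w / u) = b * (-w / v) ↔ a * v = b * u := by
  rw [mul_div_assoc', mul_div_assoc', div_eq_div_iff hu hv,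
    show a * -w * v = -w * (a * v) by ring, show b * -w * u = -w * (b * u) by ring,
    mul_right_inj' (neg_ne_zero.2 hw)]

theorem ratio_system_iff_eq_one_sub {ι : Type*} [Fintype ι] (hcard : 2 < Fintype.card ι)
    {w : ι → ℝ} (hw0 : ∀ i, w i ≠ 0) (hw1 : ∀ i, w i ≠ 1) (hsum : ∑ i, w i = 1)
    {ρ : ι → ι → ℝ} (hρ : ∀ i j, i ≠ j → ρ i j = -w j / (1 - w i)) (lam : ι → ℝ) :
    ((∀ i j k, i ≠ j → k ≠ j → lam i * ρ i j = lam k * ρ k j) ∧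
        ∑ i, lam i = (Fintype.card ι : ℝ) - 1) ↔
      ∀ i, lam i = 1 - w i := by
  have hu : ∀ i, 1 - w i ≠ 0 := fun i => sub_ne_zero.2 (hw1 i).symm
  have hpair : ∀ i j k, i ≠ j → k ≠ j →
      (lam i * ρ i j = lam k * ρ k j ↔ lam i * (1 - w k) = lam k * (1 - w i)) := by
    intro i j k hij hkj
    rw [hρ i j hij, hρ k j hkj]
    exact mul_neg_div_eq_mul_neg_div_iff (hw0 j) (hu i) (hu k)
  have hsum' : ∑ i, (1 - w i) = (Fintype.card ι : ℝ) - 1 := by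
    simp [sum_sub_distrib, hsum]
  constructor
  · rintro ⟨hcons, hlam⟩
    have hcross : ∀ i k, lam i * (1 - w k) = lam k * (1 - w i) := by
      intro i k
      obtain ⟨j, hji, hjk⟩ := Fintype.exists_ne_ne_of_two_lt_card hcard i k
      exact (hpair i j k hji.symm hjk.symm).1 (hcons i j k hji.symm hjk.symm)
    have hcard' : (2 : ℝ) < Fintype.card ι := by exact_mod_cast hcard
    refine congrFun (eq_of_forall_mul_eq_mul_of_sum_eq hcross (hlam.trans hsum'.symm) ?_)
    rw [hsum']
    linarith
  · intro hlam
    obtain rfl : lam = fun i => 1 - w i := funext hlam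
    exact ⟨fun i j k hij hkj => (hpair i j k hij hkj).2 (mul_comm _ _), hsum'⟩

namespace CoderModel

variable {C : Type*} (β : ℝ) (τ p : C → ℝ)

def e1 (c : C) : ℝ := β * τ c + (1 - β) * p c

def e2 [DecidableEq C] (c₁ c₂ : C) : ℝ :=
  β ^ 2 * (if c₁ = c₂ then 1 else 0) * τ c₁ + β * (1 - β) * (τ c₁ * p c₂ + τ c₂ * p c₁)
    + (1 - β) ^ 2 * p c₁ * p c₂

variable [DecidableEq C]

theorem e2_self_sub_e1_sq (c : C) : e2 β τ p c c - e1 β τ p c ^ 2 = β ^ 2 * τ c * (1 - τ c) := by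
  rw [e2, e1, if_pos rfl]
  ring

theorem e2_sub_e1_mul_e1 {c d : C} (h : c ≠ d) :
    e2 β τ p c d - e1 β τ p c * e1 β τ p d = -(β ^ 2 * τ c * τ d) := by
  simp only [e2, e1, if_neg h]
  ring

theorem e2_sub_e1_mul_e1_div_e2_self_sub_e1_sq {c d : C} (h : c ≠ d) (hβ : β ≠ 0)
    (hc : τ c ≠ 0) :
    (e2 β τ p c d - e1 β τ p c * e1 β τ p d) / (e2 β τ p c c - e1 β τ p c ^ 2)
      = -τ d / (1 - τ c) := by
  rw [e2_sub_e1_mul_e1 β τ p h, e2_self_sub_e1_sq, neg_mul_eq_mul_neg]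
  exact mul_div_mul_left _ _ (mul_ne_zero (pow_ne_zero 2 hβ) hc)

theorem e2_self_ne_e1_sq_iff {c : C} (hc : τ c ≠ 1) :
    e2 β τ p c c ≠ e1 β τ p c ^ 2 ↔ β ≠ 0 ∧ τ c ≠ 0 := by
  rw [← sub_ne_zero, e2_self_sub_e1_sq, mul_ne_zero_iff, mul_ne_zero_iff,
    pow_ne_zero_iff two_ne_zero, and_iff_left (sub_ne_zero.2 hc.symm)]

theorem sum_e2_self_sub_e1_sq [Fintype C] (hτ : ∑ c, τ c = 1) :
    ∑ c, (e2 β τ p c c - e1 β τ p c ^ 2) = β ^ 2 * (1 - ∑ c, τ c ^ 2) :=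
  calc ∑ c, (e2 β τ p c c - e1 β τ p c ^ 2) = ∑ c, (β ^ 2 * τ c - β ^ 2 * τ c ^ 2) :=
        sum_congr rfl fun c _ => by rw [e2_self_sub_e1_sq]; ring
    _ = β ^ 2 * (1 - ∑ c, τ c ^ 2) := by rw [sum_sub_distrib, ← mul_sum, ← mul_sum, hτ]; ring

end CoderModel

theorem stmt_17_general {C : Type*} [Fintype C] [DecidableEq C]
    {N : ℕ} (hN : 1 ≤ N) (γ : Fin N → C)
    (β : ℝ) (hβ0 : 0 ≤ β)
    (p : C → ℝ)
    (τ : C → ℝ)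
    (hτ : ∀ c, τ c = ((Finset.univ.filter (fun k : Fin N => γ k = c)).card : ℝ) / (N : ℝ))
    (e1 : C → ℝ) (he1 : ∀ c, e1 c = β * τ c + (1 - β) * p c)
    (e2p : C → C → ℝ)
    (he2p : ∀ c₁ c₂, e2p c₁ c₂ = β ^ 2 * (if c₁ = c₂ then 1 else 0) * τ c₁
      + β * (1 - β) * (τ c₁ * p c₂ + τ c₂ * p c₁) + (1 - β) ^ 2 * p c₁ * p c₂)
    (hτlt : ∀ c, τ c < 1)
    (m : ℕ) (hm : 3 ≤ m)
    (cc : Fin m → C) (hinj : Function.Injective cc)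
    (hrange : ∀ c : C, (∃ i, cc i = c) ↔ e2p c c ≠ e1 c ^ 2)
    (ρ : Fin m → Fin m → ℝ)
    (hρ : ∀ i j, ρ i j
      = (e2p (cc i) (cc j) - e1 (cc i) * e1 (cc j)) / (e2p (cc i) (cc i) - e1 (cc i) ^ 2)) :
    (∀ lam : Fin m → ℝ,
      ((∀ i j k : Fin m, i ≠ j → k ≠ j → lam i * ρ i j = lam k * ρ k j) ∧
        ∑ i, lam i = (m : ℝ) - 1)
      ↔ ∀ i, lam i = 1 - τ (cc i)) ∧
    (∀ lam : Fin m → ℝ, (∀ i, lam i = 1 - τ (cc i)) →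
      β = Real.sqrt ((∑ c, (e2p c c - e1 c ^ 2)) / (1 - ∑ j, (1 - lam j) ^ 2))) := by
  obtain rfl : e1 = CoderModel.e1 β τ p := funext he1
  obtain rfl : e2p = CoderModel.e2 β τ p := funext₂ he2p
  have : Nonempty (Fin N) := ⟨⟨0, hN⟩⟩
  have hτ0 : ∀ c, 0 ≤ τ c := fun c => by rw [hτ]; positivity
  have hτsum : ∑ c, τ c = 1 := by simpa [← hτ] using sum_card_fiber_div_card_eq_one γ
  have hmem : ∀ c, (∃ i, cc i = c) ↔ β ≠ 0 ∧ τ c ≠ 0 := fun c =>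
    (hrange c).trans (CoderModel.e2_self_ne_e1_sq_iff β τ p (hτlt c).ne)
  have hβ : β ≠ 0 := ((hmem (cc ⟨0, by omega⟩)).1 ⟨_, rfl⟩).1
  have hw0 : ∀ i, τ (cc i) ≠ 0 := fun i => ((hmem (cc i)).1 ⟨i, rfl⟩).2
  have hoff : ∀ c ∉ Set.range cc, τ c = 0 := fun c hc =>
    by_contra fun h => hc ((hmem c).2 ⟨hβ, h⟩)
  have hw : ∑ i, τ (cc i) = 1 := by
    rw [Fintype.sum_of_injective cc hinj _ τ hoff fun _ => rfl, hτsum]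
  refine ⟨fun lam => ?_, fun lam hlam => ?_⟩
  · have hρ' : ∀ i j, i ≠ j → ρ i j = -τ (cc j) / (1 - τ (cc i)) := fun i j hij => by
      rw [hρ]
      exact CoderModel.e2_sub_e1_mul_e1_div_e2_self_sub_e1_sq β τ p (hinj.ne hij) hβ (hw0 i)
    simpa only [Fintype.card_fin] using ratio_system_iff_eq_one_sub (by rw [Fintype.card_fin]; omega) hw0
      (fun i => (hτlt _).ne) hw hρ' lam
  · have hsq : ∑ j, (1 - lam j) ^ 2 = ∑ c, τ c ^ 2 :=
      Fintype.sum_of_injective cc hinj _ _ (fun c hc => by simp [hoff c hc]) fun j => by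
        rw [hlam]; ring
    rw [CoderModel.sum_e2_self_sub_e1_sq β τ p hτsum, hsq,
      mul_div_cancel_right₀ _ (sub_ne_zero.2 (sum_sq_lt_one_of_sum_eq_one hτ0 hτlt hτsum).ne'),
      Real.sqrt_sq hβ0]

/-- Theorem 1, part 5: characterization of (1-τ) as the unique solution of a linear
system in the ρ's, and the resulting formula for β. -/
theorem stmt_17 {C : Type*} [Fintype C] [DecidableEq C] [Nonempty C]
    {N : ℕ} (hN : 1 ≤ N) (γ : Fin N → C)
    (β : ℝ) (hβ0 : 0 ≤ β) (hβ1 : β ≤ 1)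
    (p : C → ℝ) (hp0 : ∀ c, 0 ≤ p c) (hp1 : ∀ c, p c ≤ 1) (hpsum : ∑ c, p c = 1)
    (τ : C → ℝ)
    (hτ : ∀ c, τ c = ((Finset.univ.filter (fun k : Fin N => γ k = c)).card : ℝ) / (N : ℝ))
    (e1 : C → ℝ) (he1 : ∀ c, e1 c = β * τ c + (1 - β) * p c)
    (e2p : C → C → ℝ)
    (he2p : ∀ c₁ c₂, e2p c₁ c₂ = β ^ 2 * (if c₁ = c₂ then 1 else 0) * τ c₁
      + β * (1 - β) * (τ c₁ * p c₂ + τ c₂ * p c₁) + (1 - β) ^ 2 * p c₁ * p c₂)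
    (hτlt : ∀ c, τ c < 1)
    (m : ℕ) (hm : 3 ≤ m)
    (cc : Fin m → C) (hinj : Function.Injective cc)
    (hrange : ∀ c : C, (∃ i, cc i = c) ↔ e2p c c ≠ e1 c ^ 2)
    (ρ : Fin m → Fin m → ℝ)
    (hρ : ∀ i j, ρ i j
      = (e2p (cc i) (cc j) - e1 (cc i) * e1 (cc j)) / (e2p (cc i) (cc i) - e1 (cc i) ^ 2)) :
    (∀ lam : Fin m → ℝ,
      ((∀ i j k : Fin m, i ≠ j → k ≠ j → lam i * ρ i j = lam k * ρ k j) ∧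
        ∑ i, lam i = (m : ℝ) - 1)
      ↔ ∀ i, lam i = 1 - τ (cc i)) ∧
    (∀ lam : Fin m → ℝ, (∀ i, lam i = 1 - τ (cc i)) →
      β = Real.sqrt ((∑ c, (e2p c c - e1 c ^ 2)) / (1 - ∑ j, (1 - lam j) ^ 2))) :=
  stmt_17_general hN γ β hβ0 p τ hτ e1 he1 e2p he2p hτlt m hm cc hinj hrange ρ hρ
end

section
/- Let (β, γ, p) be a coder model with τ_c < 1 for all c ∈ C, let C* := {c ∈ C : e_{2,c} ≠ e_{1,c}²}, and let c_i, c_j ∈ C*. Then (e_{2,c_i,c_j} − e_{1,c_i}·e_{1,c_j})/(e_{2,c_i} − e_{1,c_i}²) = (δ_{c_i,c_j}·τ_{c_i} − τ_{c_i}·τ_{c_j})/(τ_{c_i}·(1 − τ_{c_i})), where δ is the Kronecker delta. -/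
/-! The β-mixture with the prior `p` cancels from the covariance: `e₂(c₁,c₂) − e₁(c₁)e₁(c₂)` equals
`β²(δ τ − τ τ)`. The `β²` then cancels from the quotient, and it is nonzero because the variance
of `c_i` is. -/

section CoderModel

variable {C : Type*} [DecidableEq C] (β : ℝ) (τ p : C → ℝ)

theorem coder_covariance_eq (c₁ c₂ : C) :
    (β ^ 2 * (if c₁ = c₂ then 1 else 0) * τ c₁
      + β * (1 - β) * (τ c₁ * p c₂ + τ c₂ * p c₁) + (1 - β) ^ 2 * p c₁ * p c₂)
      - (β * τ c₁ + (1 - β) * p c₁) * (β * τ c₂ + (1 - β) * p c₂)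
      = β ^ 2 * ((if c₁ = c₂ then 1 else 0) * τ c₁ - τ c₁ * τ c₂) := by
  split_ifs <;> ring

theorem coder_variance_eq (c : C) :
    (β ^ 2 * (if c = c then 1 else 0) * τ c
      + β * (1 - β) * (τ c * p c + τ c * p c) + (1 - β) ^ 2 * p c * p c)
      - (β * τ c + (1 - β) * p c) ^ 2
      = β ^ 2 * (τ c * (1 - τ c)) := by
  rw [sq (β * τ c + (1 - β) * p c), coder_covariance_eq, if_pos rfl]
  ring

end CoderModel

theorem stmt_18_general {C : Type*} [DecidableEq C]
    (β : ℝ)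
    (p : C → ℝ)
    (τ : C → ℝ)
    (e1 : C → ℝ) (he1 : ∀ c, e1 c = β * τ c + (1 - β) * p c)
    (e2p : C → C → ℝ)
    (he2p : ∀ c₁ c₂, e2p c₁ c₂ = β ^ 2 * (if c₁ = c₂ then 1 else 0) * τ c₁
      + β * (1 - β) * (τ c₁ * p c₂ + τ c₂ * p c₁) + (1 - β) ^ 2 * p c₁ * p c₂)
    (ci cj : C) (hi : e2p ci ci ≠ e1 ci ^ 2) :
    (e2p ci cj - e1 ci * e1 cj) / (e2p ci ci - e1 ci ^ 2)
      = ((if ci = cj then 1 else 0) * τ ci - τ ci * τ cj) / (τ ci * (1 - τ ci)) := by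
  have hvar : e2p ci ci - e1 ci ^ 2 = β ^ 2 * (τ ci * (1 - τ ci)) := by
    rw [he2p, he1, coder_variance_eq]
  have hβ : β ^ 2 ≠ 0 := left_ne_zero_of_mul (hvar ▸ sub_ne_zero.mpr hi)
  rw [hvar, he2p, he1, he1, coder_covariance_eq, mul_div_mul_left _ _ hβ]

/-- The identity `ρ_{i,j} = (δ_{i,j}τ_i − τ_i τ_j)/(τ_i(1−τ_i))` for elements of C*. -/
theorem stmt_18 {C : Type*} [Fintype C] [DecidableEq C] [Nonempty C]
    {N : ℕ} (hN : 1 ≤ N) (γ : Fin N → C)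
    (β : ℝ) (hβ0 : 0 ≤ β) (hβ1 : β ≤ 1)
    (p : C → ℝ) (hp0 : ∀ c, 0 ≤ p c) (hp1 : ∀ c, p c ≤ 1) (hpsum : ∑ c, p c = 1)
    (τ : C → ℝ)
    (hτ : ∀ c, τ c = ((Finset.univ.filter (fun k : Fin N => γ k = c)).card : ℝ) / (N : ℝ))
    (e1 : C → ℝ) (he1 : ∀ c, e1 c = β * τ c + (1 - β) * p c)
    (e2p : C → C → ℝ)
    (he2p : ∀ c₁ c₂, e2p c₁ c₂ = β ^ 2 * (if c₁ = c₂ then 1 else 0) * τ c₁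
      + β * (1 - β) * (τ c₁ * p c₂ + τ c₂ * p c₁) + (1 - β) ^ 2 * p c₁ * p c₂)
    (hτlt : ∀ c, τ c < 1)
    (ci cj : C) (hi : e2p ci ci ≠ e1 ci ^ 2) (hj : e2p cj cj ≠ e1 cj ^ 2) :
    (e2p ci cj - e1 ci * e1 cj) / (e2p ci ci - e1 ci ^ 2)
      = ((if ci = cj then 1 else 0) * τ ci - τ ci * τ cj) / (τ ci * (1 - τ ci)) :=
  stmt_18_general β p τ e1 he1 e2p he2p ci cj hi
end

section
/- Let (β, γ, p) be a coder model with C = {c₁, c₂} (exactly two categories) and τ_c < 1 for all c ∈ C. Let e₁ := max(e_{1,c₁}, e_{1,c₂}) and define I := [0,1] if e₁ = 1, and I := [0, 2(1−e₁)] ∪ [1 − e₁ + β²·τ_{c₁}(1−τ_{c₁})/(1−e₁), 1] if e₁ < 1. Suppose β' ∈ [0,1] satisfies β' ∈ [2β·√(τ_{c₁}(1−τ_{c₁})), e₁ + β²·τ_{c₁}(1−τ_{c₁})/e₁] ∩ I and β'² = 4β²·τ_{c₁}(1−τ_{c₁})/(1 − n²/N²) for some n ∈ {1,...,N} with n + N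 even. Then there exist a function γ' : {1,...,N} → C and a distribution p' : C → [0,1] with Σ_{c∈C} p'_c = 1 such that the coder model (β', γ', p') has the same expectation values as (β, γ, p): e'_{1,c} = e_{1,c} for all c ∈ C and e'_{2,c,c'} = e_{2,c,c'} for all c, c' ∈ C. -/
/-! With two categories, `e₂` is determined by `e₁` and the single number `K = β² τ₁ τ₂`:
`e₂(c, c') = e₁(c) e₁(c') ± K`. So it suffices to code a share `t = m / N` of the items as the
category with the larger `e₁` so that `β'² t (1 - t) = K` — the hypothesis on `n` says that
`m = (N + n) / 2` does this — and then to find a prior `p'` reproducing `e₁`. Such a prior exists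
iff `β' t ≤ max e₁` and `β' (1 - t) ≤ 1 - max e₁`, and the interval conditions on `β'` place these
two roots of `X² - β' X + K` accordingly. -/

open Finset Set

lemma mul_eq_of_eq_div_of_le {x y d : ℝ} (h : x = y / d) (hy : 0 ≤ y) (hyx : y ≤ x) :
    x * d = y := by
  rcases eq_or_ne d 0 with rfl | hd
  · rw [div_zero] at h
    subst h
    rw [mul_zero]
    linarith
  · rw [h, div_mul_cancel₀ _ hd]

lemma exists_mem_Icc_add_mul_eq {β x e : ℝ} (hβ : β ≤ 1) (hx : x ≤ e) (hy : β - x ≤ 1 - e) :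
    ∃ P ∈ Icc (0 : ℝ) 1, x + (1 - β) * P = e := by
  rcases hβ.eq_or_lt with rfl | hβ
  · exact ⟨0, by simp, by linarith⟩
  · refine ⟨(e - x) / (1 - β), ⟨div_nonneg (by linarith) (by linarith),
      (div_le_one (by linarith)).2 (by linarith)⟩, ?_⟩
    field_simp
    ring

/-- `β t` and `β (1 - t)` are the roots of `X² - β X + K`: the upper bound on `β` puts `M` above
the larger one, and the condition on `I` puts `1 - M` above the smaller one. -/
lemma mul_le_and_mul_one_sub_le {β t M K : ℝ} (hβ0 : 0 ≤ β) (hβ1 : β ≤ 1)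
    (ht : 1 / 2 ≤ t) (ht1 : t ≤ 1) (hM : 1 / 2 ≤ M)
    (hK : β ^ 2 * (t * (1 - t)) = K) (hKM : K ≤ M * (1 - M)) (hup : β ≤ M + K / M)
    (hI : M < 1 → β ∈ Icc 0 (2 * (1 - M)) ∪ Icc (1 - M + K / (1 - M)) 1) :
    β * t ≤ M ∧ β * (1 - t) ≤ 1 - M := by
  have hx : 0 ≤ β * (1 - t) := mul_nonneg hβ0 (by linarith)
  have hyx : β * (1 - t) ≤ β * t := mul_le_mul_of_nonneg_left (by linarith) hβ0
  have hprod : β * t * (β * (1 - t)) = K := by rw [← hK]; ring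
  have hM1 : M ≤ 1 := by nlinarith
  have hqM : β * M ≤ M ^ 2 + K := by
    have := mul_le_mul_of_nonneg_right hup (by linarith : 0 ≤ M)
    rwa [add_mul, div_mul_cancel₀ _ (by linarith), ← sq] at this
  refine ⟨by nlinarith, ?_⟩
  rcases hM1.eq_or_lt with rfl | hM1
  · nlinarith
  rcases hI hM1 with ⟨-, hβM⟩ | ⟨hβM, -⟩
  · nlinarith
  · have hq : (1 - M) ^ 2 + K ≤ β * (1 - M) := by
      have := mul_le_mul_of_nonneg_right hβM (by linarith : 0 ≤ 1 - M)
      rwa [add_mul, div_mul_cancel₀ _ (by linarith), ← sq] at this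
    nlinarith

lemma Fintype.sum_eq_add_of_forall_eq_or_eq {C M : Type*} [Fintype C] [AddCommMonoid M] {a b : C}
    (hab : a ≠ b) (htwo : ∀ c, c = a ∨ c = b) (f : C → M) : ∑ c, f c = f a + f b :=
  Fintype.sum_eq_add a b hab fun c hc => ((htwo c).elim hc.1 hc.2).elim

namespace CoderModel

variable {C : Type*}

/-- `freq γ`, `expect₁ β τ p` and `expect₂ β τ p` are the paper's `τ`, `e₁` and `e₂`. -/
noncomputable def freq {N : ℕ} [DecidableEq C] (γ : Fin N → C) (c : C) : ℝ :=
  (#{k | γ k = c} : ℝ) / N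

def expect₁ (β : ℝ) (τ p : C → ℝ) (c : C) : ℝ :=
  β * τ c + (1 - β) * p c

def expect₂ [DecidableEq C] (β : ℝ) (τ p : C → ℝ) (c c' : C) : ℝ :=
  β ^ 2 * (if c = c' then 1 else 0) * τ c
    + β * (1 - β) * (τ c * p c' + τ c' * p c) + (1 - β) ^ 2 * p c * p c'

section Freq

variable [DecidableEq C] {N : ℕ}

lemma freq_nonneg (γ : Fin N → C) (c : C) : 0 ≤ freq γ c := by
  unfold freq; positivity

lemma sum_freq [Fintype C] (hN : N ≠ 0) (γ : Fin N → C) : ∑ c, freq γ c = 1 := by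
  have hcard : ∑ c, #{k | γ k = c} = N := by
    rw [← card_eq_sum_card_fiberwise (by simp), card_univ, Fintype.card_fin]
  simp only [freq]
  rw [← sum_div, ← Nat.cast_sum, hcard, div_self (by exact_mod_cast hN)]

lemma freq_ite_val_lt {m : ℕ} (hm : m ≤ N) {a b : C} (hab : a ≠ b) :
    freq (fun k : Fin N => if (k : ℕ) < m then a else b) a = m / N := by
  have : univ.filter (fun k : Fin N => (if (k : ℕ) < m then a else b) = a)
      = univ.filter (fun k : Fin N => (k : ℕ) < m) := by
    ext k; by_cases hk : (k : ℕ) < m <;> simp [hk, hab.symm]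
  rw [freq, this, Fin.card_filter_val_lt, min_eq_right hm]

lemma freq_add_freq [Fintype C] (hN : N ≠ 0) {a b : C} (hab : a ≠ b)
    (htwo : ∀ c, c = a ∨ c = b) (γ : Fin N → C) : freq γ a + freq γ b = 1 := by
  rw [← Fintype.sum_eq_add_of_forall_eq_or_eq hab htwo, sum_freq hN]

end Freq

section Expect

variable [DecidableEq C]

lemma expect₂_eq (β : ℝ) (τ p : C → ℝ) (c c' : C) :
    expect₂ β τ p c c' = expect₁ β τ p c * expect₁ β τ p c'
      + β ^ 2 * ((if c = c' then 1 else 0) * τ c - τ c * τ c') := by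
  unfold expect₂ expect₁
  ring

lemma expect₂_eq_of_forall_eq_or_eq {a b : C} (hab : a ≠ b)
    (htwo : ∀ c, c = a ∨ c = b) {β : ℝ} {τ : C → ℝ} (hτ : τ a + τ b = 1) (p : C → ℝ)
    (c c' : C) :
    expect₂ β τ p c c' = expect₁ β τ p c * expect₁ β τ p c'
      + (if c = c' then 1 else -1) * (β ^ 2 * τ a * τ b) := by
  have hτb : τ b = 1 - τ a := by linarith
  rw [expect₂_eq]
  rcases htwo c with rfl | rfl <;> rcases htwo c' with rfl | rfl <;>
    simp only [if_true, if_neg hab, if_neg hab.symm, hτb] <;> ring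

variable [Fintype C]

theorem exists_model_of_split {N m : ℕ} (hN : N ≠ 0) (hm : m ≤ N) {a b : C} (hab : a ≠ b)
    (htwo : ∀ c, c = a ∨ c = b) {β β' : ℝ} (hβ' : β' ≤ 1) {τ p : C → ℝ}
    (hτ : τ a + τ b = 1) (hp : p a + p b = 1)
    (ha : β' * (m / N) ≤ expect₁ β τ p a) (hb : β' * (1 - m / N) ≤ expect₁ β τ p b)
    (hK : β' ^ 2 * (m / N * (1 - m / N)) = β ^ 2 * τ a * τ b) :
    ∃ (γ' : Fin N → C) (p' : C → ℝ), (∀ c, 0 ≤ p' c ∧ p' c ≤ 1) ∧ ∑ c, p' c = 1 ∧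
      (∀ c, expect₁ β' (freq γ') p' c = expect₁ β τ p c) ∧
      ∀ c c', expect₂ β' (freq γ') p' c c' = expect₂ β τ p c c' := by
  have he : expect₁ β τ p a + expect₁ β τ p b = 1 := by
    unfold expect₁
    linear_combination β * hτ + (1 - β) * hp
  obtain ⟨P, ⟨hP0, hP1⟩, hP⟩ := exists_mem_Icc_add_mul_eq hβ' ha (by linarith)
  set γ' : Fin N → C := fun k => if (k : ℕ) < m then a else b
  set p' : C → ℝ := fun c => if c = a then P else 1 - P
  have hfa : freq γ' a = m / N := freq_ite_val_lt hm hab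
  have hfb : freq γ' b = 1 - m / N := by linarith [freq_add_freq hN hab htwo γ']
  have h₁ : ∀ c, expect₁ β' (freq γ') p' c = expect₁ β τ p c := by
    intro c
    unfold expect₁ at he hP ⊢
    rcases htwo c with rfl | rfl
    · simp only [hfa, p', if_true]
      linarith
    · simp only [hfb, p', if_neg hab.symm]
      linarith
  refine ⟨γ', p', fun c => ?_, ?_, h₁, fun c c' => ?_⟩
  · simp only [p']
    split_ifs <;> constructor <;> linarith
  · simp [Fintype.sum_eq_add_of_forall_eq_or_eq hab htwo, p', hab.symm]
  · rw [expect₂_eq_of_forall_eq_or_eq hab htwo (freq_add_freq hN hab htwo γ'),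
      expect₂_eq_of_forall_eq_or_eq hab htwo hτ, h₁, h₁, hfa, hfb, ← hK]
    ring

theorem exists_model_of_expect₁_le {N n : ℕ} (hN : N ≠ 0) (hnN : n ≤ N) (hpar : Even (n + N))
    {a b : C} (hab : a ≠ b) (htwo : ∀ c, c = a ∨ c = b) {β β' K : ℝ} (hβ0 : 0 ≤ β)
    (hβ1 : β ≤ 1) {τ p : C → ℝ} (hτ0 : ∀ c, 0 ≤ τ c) (hp0 : ∀ c, 0 ≤ p c)
    (hτ : τ a + τ b = 1) (hp : p a + p b = 1) (hβ'0 : 0 ≤ β') (hβ'1 : β' ≤ 1)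
    (hKdef : β ^ 2 * τ a * τ b = K) (hK : β' ^ 2 * (1 - (n : ℝ) ^ 2 / (N : ℝ) ^ 2) = 4 * K)
    (hle : expect₁ β τ p b ≤ expect₁ β τ p a)
    (hup : β' ≤ expect₁ β τ p a + K / expect₁ β τ p a)
    (hI : expect₁ β τ p a < 1 → β' ∈ Icc 0 (2 * (1 - expect₁ β τ p a)) ∪
      Icc (1 - expect₁ β τ p a + K / (1 - expect₁ β τ p a)) 1) :
    ∃ (γ' : Fin N → C) (p' : C → ℝ), (∀ c, 0 ≤ p' c ∧ p' c ≤ 1) ∧ ∑ c, p' c = 1 ∧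
      (∀ c, expect₁ β' (freq γ') p' c = expect₁ β τ p c) ∧
      ∀ c c', expect₂ β' (freq γ') p' c c' = expect₂ β τ p c c' := by
  obtain ⟨k, hk⟩ := hpar
  have hkN : k ≤ N := by omega
  have hNpos : (0 : ℝ) < N := by positivity
  have hkR : (k : ℝ) = (n + N) / 2 := by
    have : ((n + N : ℕ) : ℝ) = k + k := by exact_mod_cast hk
    push_cast at this
    linarith
  have ht : 1 / 2 ≤ (k : ℝ) / N := by
    rw [le_div_iff₀ hNpos, hkR]
    linarith [n.cast_nonneg (α := ℝ)]
  have ht1 : (k : ℝ) / N ≤ 1 := (div_le_one hNpos).2 (by exact_mod_cast hkN)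
  have htt : β' ^ 2 * (k / N * (1 - k / N)) = K := by
    have : (k : ℝ) / N * (1 - k / N) = (1 - (n : ℝ) ^ 2 / (N : ℝ) ^ 2) / 4 := by
      rw [hkR]
      field_simp
      ring
    rw [this]
    linarith
  have he : expect₁ β τ p a + expect₁ β τ p b = 1 := by
    unfold expect₁
    linear_combination β * hτ + (1 - β) * hp
  have hβτ : ∀ c, β * τ c ≤ expect₁ β τ p c := fun c =>
    le_add_of_nonneg_right (mul_nonneg (by linarith) (hp0 c))
  have hKle : K ≤ expect₁ β τ p a * (1 - expect₁ β τ p a) := by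
    rw [← hKdef, show 1 - expect₁ β τ p a = expect₁ β τ p b by linarith]
    calc β ^ 2 * τ a * τ b = (β * τ a) * (β * τ b) := by ring
      _ ≤ expect₁ β τ p a * expect₁ β τ p b :=
        mul_le_mul (hβτ a) (hβτ b) (mul_nonneg hβ0 (hτ0 b))
          ((mul_nonneg hβ0 (hτ0 a)).trans (hβτ a))
  obtain ⟨ha, hb⟩ :=
    mul_le_and_mul_one_sub_le hβ'0 hβ'1 ht ht1 (by linarith) htt hKle hup hI
  exact exists_model_of_split hN hkN hab htwo hβ'1 hτ hp ha (by linarith) (htt.trans hKdef.symm)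

end Expect

end CoderModel

open CoderModel

theorem stmt_19_general {C : Type*} [Fintype C] [DecidableEq C]
    {N : ℕ} (hN : 1 ≤ N) (γ : Fin N → C)
    (β : ℝ) (hβ0 : 0 ≤ β) (hβ1 : β ≤ 1)
    (p : C → ℝ) (hp0 : ∀ c, 0 ≤ p c) (hpsum : ∑ c, p c = 1)
    (τ : C → ℝ)
    (hτ : ∀ c, τ c = ((Finset.univ.filter (fun k : Fin N => γ k = c)).card : ℝ) / (N : ℝ))
    (e1 : C → ℝ) (he1 : ∀ c, e1 c = β * τ c + (1 - β) * p c)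
    (e2p : C → C → ℝ)
    (he2p : ∀ c₁ c₂, e2p c₁ c₂ = β ^ 2 * (if c₁ = c₂ then 1 else 0) * τ c₁
      + β * (1 - β) * (τ c₁ * p c₂ + τ c₂ * p c₁) + (1 - β) ^ 2 * p c₁ * p c₂)
    -- exactly two categories
    (c₁ c₂ : C) (hne : c₁ ≠ c₂) (htwo : ∀ c : C, c = c₁ ∨ c = c₂)
    (β' : ℝ) (hβ'0 : 0 ≤ β') (hβ'1 : β' ≤ 1)
    -- β' lies in the interval of indeterminacy …
    (hmem : β' ∈ Set.Icc (2 * β * Real.sqrt (τ c₁ * (1 - τ c₁)))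
      (max (e1 c₁) (e1 c₂) + β ^ 2 * τ c₁ * (1 - τ c₁) / max (e1 c₁) (e1 c₂)))
    -- … intersected with the set I
    (hI2 : max (e1 c₁) (e1 c₂) < 1 →
      β' ∈ Set.Icc (0 : ℝ) (2 * (1 - max (e1 c₁) (e1 c₂))) ∪
        Set.Icc (1 - max (e1 c₁) (e1 c₂)
          + β ^ 2 * τ c₁ * (1 - τ c₁) / (1 - max (e1 c₁) (e1 c₂))) 1)
    -- β'² = 4β²τ₁(1−τ₁)/(1 − n²/N²) for some n ∈ {1,…,N} with n+N even
    (hn : ∃ n : ℕ, 1 ≤ n ∧ n ≤ N ∧ Even (n + N) ∧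
      β' ^ 2 = 4 * β ^ 2 * τ c₁ * (1 - τ c₁) / (1 - (n : ℝ) ^ 2 / (N : ℝ) ^ 2)) :
    ∃ (γ' : Fin N → C) (p' : C → ℝ),
      (∀ c, 0 ≤ p' c ∧ p' c ≤ 1) ∧ (∑ c, p' c = 1) ∧
      (∀ c : C,
        β' * (((Finset.univ.filter (fun k : Fin N => γ' k = c)).card : ℝ) / (N : ℝ))
          + (1 - β') * p' c = e1 c) ∧
      (∀ ca cb : C,
        β' ^ 2 * (if ca = cb then 1 else 0)
            * (((Finset.univ.filter (fun k : Fin N => γ' k = ca)).card : ℝ) / (N : ℝ))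
          + β' * (1 - β')
            * ((((Finset.univ.filter (fun k : Fin N => γ' k = ca)).card : ℝ) / (N : ℝ)) * p' cb
              + (((Finset.univ.filter (fun k : Fin N => γ' k = cb)).card : ℝ) / (N : ℝ)) * p' ca)
          + (1 - β') ^ 2 * p' ca * p' cb = e2p ca cb) := by
  obtain ⟨n, -, hnN, hpar, hβ'n⟩ := hn
  obtain rfl : τ = freq γ := funext hτ
  obtain rfl : e1 = expect₁ β (freq γ) p := funext he1
  obtain rfl : e2p = expect₂ β (freq γ) p := funext fun c => funext (he2p c)
  have hN0 : N ≠ 0 := by omega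
  have hτsum : freq γ c₁ + freq γ c₂ = 1 := freq_add_freq hN0 hne htwo γ
  have hpsum' : p c₁ + p c₂ = 1 := by
    rwa [Fintype.sum_eq_add_of_forall_eq_or_eq hne htwo] at hpsum
  obtain ⟨hlo, hup⟩ := hmem
  have hs : 0 ≤ freq γ c₁ * (1 - freq γ c₁) :=
    mul_nonneg (freq_nonneg γ c₁) (by linarith [freq_nonneg γ c₂])
  have hK : β' ^ 2 * (1 - (n : ℝ) ^ 2 / (N : ℝ) ^ 2)
      = 4 * (β ^ 2 * freq γ c₁ * (1 - freq γ c₁)) := by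
    -- for `n = N` the division in `hβ'n` is by zero; then the lower bound on `β'` forces `K = 0`
    refine (mul_eq_of_eq_div_of_le hβ'n ?_ ?_).trans (by ring)
    · rw [mul_assoc]
      exact mul_nonneg (by positivity) hs
    calc 4 * β ^ 2 * freq γ c₁ * (1 - freq γ c₁)
        = (2 * β * √(freq γ c₁ * (1 - freq γ c₁))) ^ 2 := by
          rw [mul_pow, mul_pow, Real.sq_sqrt hs]
          ring
      _ ≤ β' ^ 2 := pow_le_pow_left₀ (by positivity) hlo 2
  rcases le_total (expect₁ β (freq γ) p c₂) (expect₁ β (freq γ) p c₁) with h | h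
  · rw [max_eq_left h] at hup hI2
    exact exists_model_of_expect₁_le hN0 hnN hpar hne htwo hβ0 hβ1 (freq_nonneg γ) hp0 hτsum hpsum'
      hβ'0 hβ'1 (by linear_combination (β ^ 2 * freq γ c₁) * hτsum) hK h hup hI2
  · rw [max_eq_right h] at hup hI2
    exact exists_model_of_expect₁_le hN0 hnN hpar hne.symm (fun c => (htwo c).symm) hβ0 hβ1
      (freq_nonneg γ) hp0 (by linarith) (by linarith) hβ'0 hβ'1
      (by linear_combination (β ^ 2 * freq γ c₁) * hτsum) hK h hup hI2

/-- Proposition 6: in the two-category case the double coincidence expectations do not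
determine β uniquely: certain β' admit a coder model (β', γ', p') with the same
expectation values. -/
theorem stmt_19 {C : Type*} [Fintype C] [DecidableEq C]
    {N : ℕ} (hN : 1 ≤ N) (γ : Fin N → C)
    (β : ℝ) (hβ0 : 0 ≤ β) (hβ1 : β ≤ 1)
    (p : C → ℝ) (hp0 : ∀ c, 0 ≤ p c) (hp1 : ∀ c, p c ≤ 1) (hpsum : ∑ c, p c = 1)
    (τ : C → ℝ)
    (hτ : ∀ c, τ c = ((Finset.univ.filter (fun k : Fin N => γ k = c)).card : ℝ) / (N : ℝ))
    (e1 : C → ℝ) (he1 : ∀ c, e1 c = β * τ c + (1 - β) * p c)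
    (e2p : C → C → ℝ)
    (he2p : ∀ c₁ c₂, e2p c₁ c₂ = β ^ 2 * (if c₁ = c₂ then 1 else 0) * τ c₁
      + β * (1 - β) * (τ c₁ * p c₂ + τ c₂ * p c₁) + (1 - β) ^ 2 * p c₁ * p c₂)
    -- exactly two categories
    (c₁ c₂ : C) (hne : c₁ ≠ c₂) (htwo : ∀ c : C, c = c₁ ∨ c = c₂)
    (hτlt : ∀ c, τ c < 1)
    (β' : ℝ) (hβ'0 : 0 ≤ β') (hβ'1 : β' ≤ 1)
    -- β' lies in the interval of indeterminacy …
    (hmem : β' ∈ Set.Icc (2 * β * Real.sqrt (τ c₁ * (1 - τ c₁)))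
      (max (e1 c₁) (e1 c₂) + β ^ 2 * τ c₁ * (1 - τ c₁) / max (e1 c₁) (e1 c₂)))
    -- … intersected with the set I
    (hI1 : max (e1 c₁) (e1 c₂) = 1 → β' ∈ Set.Icc (0 : ℝ) 1)
    (hI2 : max (e1 c₁) (e1 c₂) < 1 →
      β' ∈ Set.Icc (0 : ℝ) (2 * (1 - max (e1 c₁) (e1 c₂))) ∪
        Set.Icc (1 - max (e1 c₁) (e1 c₂)
          + β ^ 2 * τ c₁ * (1 - τ c₁) / (1 - max (e1 c₁) (e1 c₂))) 1)
    -- β'² = 4β²τ₁(1−τ₁)/(1 − n²/N²) for some n ∈ {1,…,N} with n+N even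
    (hn : ∃ n : ℕ, 1 ≤ n ∧ n ≤ N ∧ Even (n + N) ∧
      β' ^ 2 = 4 * β ^ 2 * τ c₁ * (1 - τ c₁) / (1 - (n : ℝ) ^ 2 / (N : ℝ) ^ 2)) :
    ∃ (γ' : Fin N → C) (p' : C → ℝ),
      (∀ c, 0 ≤ p' c ∧ p' c ≤ 1) ∧ (∑ c, p' c = 1) ∧
      (∀ c : C,
        β' * (((Finset.univ.filter (fun k : Fin N => γ' k = c)).card : ℝ) / (N : ℝ))
          + (1 - β') * p' c = e1 c) ∧
      (∀ ca cb : C,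
        β' ^ 2 * (if ca = cb then 1 else 0)
            * (((Finset.univ.filter (fun k : Fin N => γ' k = ca)).card : ℝ) / (N : ℝ))
          + β' * (1 - β')
            * ((((Finset.univ.filter (fun k : Fin N => γ' k = ca)).card : ℝ) / (N : ℝ)) * p' cb
              + (((Finset.univ.filter (fun k : Fin N => γ' k = cb)).card : ℝ) / (N : ℝ)) * p' ca)
          + (1 - β') ^ 2 * p' ca * p' cb = e2p ca cb) :=
  stmt_19_general hN γ β hβ0 hβ1 p hp0 hpsum τ hτ e1 he1 e2p he2p c₁ c₂ hne htwo β' hβ'0 hβ'1 hmem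
    hI2 hn
end
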